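/- (Non-negative bias of the FDR estimator.) For each j ∈ Fin d, let S_j be a sub-σ-algebra, let W_j = E[1{j ∈ R} / |R| | S_j] be a conditional expectation (with 0/0 = 0 convention), and let φ_j be a nonnegative random variable satisfying E[φ_j | S_j] = 1 almost surely for every j ∈ H₀. Define FDRhat = Σ_{j=1}^d W_j · φ_j. Then E[FDRhat] ≥ FDR, where FDR = Σ_{j ∈ H₀} E[1{j ∈ R}/|R|]. -/
import Mathlib

open MeasureTheory

/-- Non-negative bias of the FDR estimator: with `W_j = E[1{j∈R}/|R| | S_j]` and
nonnegative `φ_j` satisfying `E[φ_j | S_j] = 1` a.s. for null `j`, the estimator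
`FDRhat = Σ_j W_j φ_j` satisfies `E[FDRhat] ≥ FDR = Σ_{j∈H₀} E[1{j∈R}/|R|]`. -/
theorem fdr_hat_nonneg_bias {Ω : Type*} [MeasurableSpace Ω] (P : Measure Ω)
    [IsProbabilityMeasure P] {d : ℕ} (R : Ω → Finset (Fin d)) (H₀ : Finset (Fin d))
    (m : Fin d → MeasurableSpace Ω) (hm : ∀ j, m j ≤ ‹MeasurableSpace Ω›)
    (φ : Fin d → Ω → ℝ)
    (hφ_nonneg : ∀ j, 0 ≤ᵐ[P] φ j)
    (hφ_int : ∀ j, Integrable (φ j) P)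
    (hφ_cond : ∀ j ∈ H₀, P[φ j | m j] =ᵐ[P] fun _ => (1 : ℝ))
    (hf_int : ∀ j : Fin d,
      Integrable (fun ω => (if j ∈ R ω then (1 : ℝ) else 0) / ((R ω).card : ℝ)) P)
    (hprod_int : ∀ j : Fin d,
      Integrable (fun ω =>
        (P[fun ω' => (if j ∈ R ω' then (1 : ℝ) else 0) / ((R ω').card : ℝ) | m j]) ω
          * φ j ω) P) :
    ∑ j ∈ H₀, ∫ ω, (if j ∈ R ω then (1 : ℝ) else 0) / ((R ω).card : ℝ) ∂P ≤
      ∫ ω, ∑ j : Fin d,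
        (P[fun ω' => (if j ∈ R ω' then (1 : ℝ) else 0) / ((R ω').card : ℝ) | m j]) ω
          * φ j ω ∂P := by
  set f : Fin d → Ω → ℝ :=
    fun j ω => (if j ∈ R ω then (1 : ℝ) else 0) / ((R ω).card : ℝ) with hf
  have hf_nonneg : ∀ j, 0 ≤ᵐ[P] f j := fun j =>
    Filter.Eventually.of_forall fun ω => by positivity
  have hW_nonneg : ∀ j, 0 ≤ᵐ[P] P[f j | m j] := fun j =>
    condExp_nonneg (hf_nonneg j)
  rw [integral_finset_sum _ fun j _ => hprod_int j]
  have key : ∀ j ∈ H₀, ∫ ω, f j ω ∂P = ∫ ω, (P[f j | m j]) ω * φ j ω ∂P := by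
    intro j hj
    have hpull : P[(P[f j | m j]) * φ j | m j]
        =ᵐ[P] (P[f j | m j]) * P[φ j | m j] :=
      condExp_mul_of_stronglyMeasurable_left stronglyMeasurable_condExp
        (hprod_int j) (hφ_int j)
    calc ∫ ω, f j ω ∂P = ∫ ω, (P[f j | m j]) ω ∂P := (integral_condExp (hm j)).symm
      _ = ∫ ω, (P[(P[f j | m j]) * φ j | m j]) ω ∂P := by
          refine integral_congr_ae ?_
          refine (hpull.trans ?_).symm
          filter_upwards [hφ_cond j hj] with ω hω
          simp [hω]
      _ = ∫ ω, (P[f j | m j]) ω * φ j ω ∂P := integral_condExp (hm j)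
  calc ∑ j ∈ H₀, ∫ ω, f j ω ∂P
      = ∑ j ∈ H₀, ∫ ω, (P[f j | m j]) ω * φ j ω ∂P := Finset.sum_congr rfl key
    _ ≤ ∑ j : Fin d, ∫ ω, (P[f j | m j]) ω * φ j ω ∂P := by
        refine Finset.sum_le_sum_of_subset_of_nonneg (Finset.subset_univ _) ?_
        intro j _ _
        refine integral_nonneg_of_ae ?_
        filter_upwards [hW_nonneg j, hφ_nonneg j] with ω h1 h2
        exact mul_nonneg h1 h2
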